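/- arXiv:1511.01402 — 2 statements merged into one kernel-verified Lean document; each statement's English description precedes it below -/
import Mathlib

section
/- Let α₁, α₂ ∈ (0,1) and T ≥ 3 a natural number, and set a_{i,j} = -(-1)^{j+1} binom(α_i, j+1). Define g₀ = a_{1,T}·a_{2,T} and g₂ = a_{1,T}·a_{2,T-2} + a_{1,T-1}·a_{2,T-1} + a_{1,T-2}·a_{2,T}. Then g₂ = g₀·(T+1)·(â + b̂ + ĉ), where â = T/((α₂-T)(α₂-T+1)), b̂ = (T+1)/((α₁-T)(α₂-T)), and ĉ = T/((α₁-T)(α₁-T+1)). -/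
/-! The recurrence `binom(α, k + 1) = binom(α, k) (α - k) / (k + 1)` expresses `a_{T-1}` and
`a_{T-2}` as explicit rational multiples of `a_T`, namely `-(T + 1) / (α - T)` and
`T (T + 1) / ((α - T) (α - T + 1))`. Substituting them, each of the three products in `g₂` becomes
`g₀` times one of the three summands, and the identity is a ring identity. -/

/-- Generalized binomial coefficient binom(α, k) = α(α-1)⋯(α-k+1)/k!. -/
noncomputable def genBinom (α : ℝ) (k : ℕ) : ℝ :=
  (∏ m ∈ Finset.range k, (α - m)) / (Nat.factorial k)

/-- Grünwald-Letnikov state-space coefficient a_{i,j} = -(-1)^{j+1} binom(α_i, j+1). -/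
noncomputable def aCoeff (α : ℝ) (j : ℕ) : ℝ := -((-1 : ℝ) ^ (j + 1)) * genBinom α (j + 1)

lemma genBinom_succ (α : ℝ) (k : ℕ) :
    genBinom α (k + 1) = genBinom α k * (α - k) / (k + 1) := by
  simp only [genBinom, Finset.prod_range_succ, Nat.factorial_succ]
  push_cast
  field_simp

lemma aCoeff_eq_mul_aCoeff_succ {α : ℝ} {n : ℕ} (hα : α ≠ n + 1) :
    aCoeff α n = (n + 2) / (n + 1 - α) * aCoeff α (n + 1) := by
  have hα' : (n : ℝ) + 1 - α ≠ 0 := sub_ne_zero.mpr hα.symm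
  rw [aCoeff, aCoeff, genBinom_succ α (n + 1), pow_succ]
  push_cast
  field_simp
  ring

lemma aCoeff_sub_one {α : ℝ} {T : ℕ} (hT : 1 ≤ T) (hα : α ≠ T) :
    aCoeff α (T - 1) = -(T + 1) / (α - T) * aCoeff α T := by
  obtain ⟨n, rfl⟩ := Nat.exists_eq_add_of_le' hT
  push_cast at hα ⊢
  rw [aCoeff_eq_mul_aCoeff_succ hα, ← neg_sub, div_neg]
  ring

lemma aCoeff_sub_two {α : ℝ} {T : ℕ} (hT : 2 ≤ T) (hα₁ : α ≠ T - 1) (hα : α ≠ T) :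
    aCoeff α (T - 2) = T * (T + 1) / ((α - T) * (α - T + 1)) * aCoeff α T := by
  have hcast : ((T - 1 : ℕ) : ℝ) = T - 1 := by rw [Nat.cast_sub (by omega), Nat.cast_one]
  rw [show T - 2 = T - 1 - 1 by omega, aCoeff_sub_one (by omega) (by rwa [hcast]), hcast,
    aCoeff_sub_one (by omega) hα]
  simp only [div_eq_mul_inv, mul_inv]
  ring

theorem g2_identity (α₁ α₂ : ℝ) (h₁ : α₁ ∈ Set.Ioo (0:ℝ) 1) (h₂ : α₂ ∈ Set.Ioo (0:ℝ) 1)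
    (T : ℕ) (hT : 3 ≤ T) :
    aCoeff α₁ T * aCoeff α₂ (T - 2) + aCoeff α₁ (T - 1) * aCoeff α₂ (T - 1) +
        aCoeff α₁ (T - 2) * aCoeff α₂ T =
      (aCoeff α₁ T * aCoeff α₂ T) * (T + 1) *
        (T / ((α₂ - T) * (α₂ - T + 1)) + (T + 1) / ((α₁ - T) * (α₂ - T)) +
          T / ((α₁ - T) * (α₁ - T + 1))) := by
  have hT' : (3 : ℝ) ≤ T := by exact_mod_cast hT
  obtain ⟨-, h₁⟩ := h₁
  obtain ⟨-, h₂⟩ := h₂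
  rw [aCoeff_sub_two (by omega) (by linarith) (by linarith), aCoeff_sub_one (by omega) (by linarith),
    aCoeff_sub_two (by omega) (by linarith) (by linarith), aCoeff_sub_one (by omega) (by linarith)]
  simp only [div_eq_mul_inv, mul_inv]
  ring
end

section
/- Let T ≥ 2 be a natural number, g₀ ≠ 0 a real number, and define F : (0,1)² → ℝ² by F(α₁,α₂) = (−g₀(T+1)(1/(α₁−T) + 1/(α₂−T)), g₀(T+1)(T/((α₂−T)(α₂−T+1)) + (T+1)/((α₁−T)(α₂−T)) + T/((α₁−T)(α₁−T+1)))). Then for any (α₁,α₂) ∈ (0,1)², the fiber F⁻¹(F(α₁,α₂)) contains at most the two points (α₁,α₂) and (α₂,α₁); in particular each fiber of F is finite. -/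
/-!
In the coordinates `x = 1 + 1/(α - T)`, which lie in `(0, 1)` when `α ∈ (0, 1)` and `T ≥ 2`,
`F` becomes a function of `S = x₁ + x₂` and `P = x₁ x₂`: the first coefficient is affine in `S`,
and for fixed `S` the second is `T S / P + (T + 1) P` up to a function of `S`. This is injective
in `P` because `(T + 1) P Q < T S` for all admissible products `P, Q`, so `F` determines `S` and
`P`, hence `{x₁, x₂}`, hence `{α₁, α₂}`.
-/

/-- The map (α₁, α₂) ↦ (g₁, g₂) expressing the transfer-function coefficients of the
two-CPE fractional-order model in terms of the fractional orders, for known g₀. -/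
noncomputable def twoCPEMap (T : ℕ) (g₀ : ℝ) (p : ℝ × ℝ) : ℝ × ℝ :=
  (-g₀ * (T + 1) * (1 / (p.1 - T) + 1 / (p.2 - T)),
   g₀ * (T + 1) * (T / ((p.2 - T) * (p.2 - T + 1)) + (T + 1) / ((p.1 - T) * (p.2 - T)) +
     T / ((p.1 - T) * (p.1 - T + 1))))

open Set

theorem eq_and_eq_or_eq_and_eq_of_add_eq_of_mul_eq {R : Type*} [CommRing R] [IsDomain R]
    {x₁ x₂ y₁ y₂ : R} (hS : x₁ + x₂ = y₁ + y₂) (hP : x₁ * x₂ = y₁ * y₂) :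
    x₁ = y₁ ∧ x₂ = y₂ ∨ x₁ = y₂ ∧ x₂ = y₁ := by
  have hroot : (x₁ - y₁) * (x₁ - y₂) = 0 := by linear_combination x₁ * hS - hP
  rcases mul_eq_zero.1 hroot with h | h
  · exact Or.inl ⟨sub_eq_zero.1 h, by linear_combination hS - h⟩
  · exact Or.inr ⟨sub_eq_zero.1 h, by linear_combination hS - h⟩

theorem eq_of_div_add_mul_eq_div_add_mul {K : Type*} [Field K] {c d P Q : K}
    (hP : P ≠ 0) (hQ : Q ≠ 0) (hPQ : d * (P * Q) ≠ c) (h : c / P + d * P = c / Q + d * Q) :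
    P = Q := by
  have hfactor : (P - Q) * (d * (P * Q) - c) = 0 := by
    field_simp at h
    linear_combination h
  exact sub_eq_zero.1 ((mul_eq_zero.1 hfactor).resolve_right (sub_ne_zero.2 hPQ))

theorem add_one_mul_mul_mul_lt {t x₁ x₂ Q : ℝ} (ht : 1 ≤ t) (hx₁ : x₁ ∈ Ioo 0 1)
    (hx₂ : x₂ ∈ Ioo 0 1) (hQ : Q ≤ 1) :
    (t + 1) * (x₁ * x₂ * Q) < t * (x₁ + x₂) := by
  obtain ⟨hx₁₀, hx₁₁⟩ := hx₁
  obtain ⟨hx₂₀, hx₂₁⟩ := hx₂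
  have hP : 2 * (x₁ * x₂) < x₁ + x₂ := by nlinarith
  have hPQ : x₁ * x₂ * Q ≤ x₁ * x₂ := mul_le_of_le_one_right (by positivity) hQ
  nlinarith

theorem mul_eq_mul_of_div_add_mul_eq {t x₁ x₂ y₁ y₂ : ℝ} (ht : 1 ≤ t)
    (hx₁ : x₁ ∈ Ioo 0 1) (hx₂ : x₂ ∈ Ioo 0 1) (hy₁ : y₁ ∈ Ioo 0 1) (hy₂ : y₂ ∈ Ioo 0 1)
    (h : t * (x₁ + x₂) / (x₁ * x₂) + (t + 1) * (x₁ * x₂) =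
      t * (x₁ + x₂) / (y₁ * y₂) + (t + 1) * (y₁ * y₂)) :
    x₁ * x₂ = y₁ * y₂ := by
  have hQ : y₁ * y₂ ≤ 1 := mul_le_one₀ hy₁.2.le hy₂.1.le hy₂.2.le
  exact eq_of_div_add_mul_eq_div_add_mul (mul_pos hx₁.1 hx₂.1).ne' (mul_pos hy₁.1 hy₂.1).ne'
    (add_one_mul_mul_mul_lt ht hx₁ hx₂ hQ).ne h

noncomputable def cpeCoord (T : ℕ) (α : ℝ) : ℝ :=
  1 + (α - T)⁻¹

theorem cpeCoord_injective (T : ℕ) : Function.Injective (cpeCoord T) := by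
  intro α β h
  simpa [cpeCoord] using h

theorem cpeCoord_mem_Ioo {T : ℕ} {α : ℝ} (hα : α + 1 < T) : cpeCoord T α ∈ Ioo 0 1 := by
  have ha : α - T < -1 := by linarith
  have hinv_neg : (α - T)⁻¹ < 0 := inv_lt_zero.2 (by linarith)
  have hinv_gt : -1 < (α - T)⁻¹ :=
    (lt_inv_of_neg (by norm_num) (by linarith)).2 (by simpa using ha)
  unfold cpeCoord
  constructor <;> linarith

theorem twoCPEMap_eq {T : ℕ} (g₀ : ℝ) {p : ℝ × ℝ} (hp₁ : p.1 + 1 < T) (hp₂ : p.2 + 1 < T) :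
    twoCPEMap T g₀ p =
      (g₀ * (T + 1) * (2 - (cpeCoord T p.1 + cpeCoord T p.2)),
       g₀ * (T + 1) * (T * (cpeCoord T p.1 + cpeCoord T p.2 - 4) +
         (T + 1) * (1 - (cpeCoord T p.1 + cpeCoord T p.2)) +
         (T * (cpeCoord T p.1 + cpeCoord T p.2) / (cpeCoord T p.1 * cpeCoord T p.2) +
           (T + 1) * (cpeCoord T p.1 * cpeCoord T p.2)))) := by
  have h₁ : p.1 - T ≠ 0 := by linarith
  have h₁' : p.1 - T + 1 ≠ 0 := by linarith
  have h₂ : p.2 - T ≠ 0 := by linarith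
  have h₂' : p.2 - T + 1 ≠ 0 := by linarith
  simp only [twoCPEMap, cpeCoord]
  ext <;> field_simp <;> ring

theorem twoCPEMap_fibers_finite (T : ℕ) (hT : 2 ≤ T) (g₀ : ℝ) (hg₀ : g₀ ≠ 0)
    (α₁ α₂ : ℝ) (h₁ : α₁ ∈ Set.Ioo (0:ℝ) 1) (h₂ : α₂ ∈ Set.Ioo (0:ℝ) 1) :
    (∀ β : ℝ × ℝ, β.1 ∈ Set.Ioo (0:ℝ) 1 → β.2 ∈ Set.Ioo (0:ℝ) 1 →
      twoCPEMap T g₀ β = twoCPEMap T g₀ (α₁, α₂) → β = (α₁, α₂) ∨ β = (α₂, α₁)) ∧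
    {β : ℝ × ℝ | β.1 ∈ Set.Ioo (0:ℝ) 1 ∧ β.2 ∈ Set.Ioo (0:ℝ) 1 ∧
      twoCPEMap T g₀ β = twoCPEMap T g₀ (α₁, α₂)}.Finite := by
  have hT₂ : (2 : ℝ) ≤ T := by exact_mod_cast hT
  have below : ∀ α ∈ Ioo (0 : ℝ) 1, α + 1 < T := fun α hα => by linarith [hα.2]
  have mem : ∀ α ∈ Ioo (0 : ℝ) 1, cpeCoord T α ∈ Ioo 0 1 := fun α hα =>
    cpeCoord_mem_Ioo (below α hα)
  have fiber : ∀ β : ℝ × ℝ, β.1 ∈ Ioo (0 : ℝ) 1 → β.2 ∈ Ioo (0 : ℝ) 1 →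
      twoCPEMap T g₀ β = twoCPEMap T g₀ (α₁, α₂) → β = (α₁, α₂) ∨ β = (α₂, α₁) := by
    intro β hβ₁ hβ₂ hβ
    rw [twoCPEMap_eq g₀ (below _ hβ₁) (below _ hβ₂), twoCPEMap_eq g₀ (below _ h₁) (below _ h₂),
      Prod.mk.injEq] at hβ
    have hc : g₀ * (T + 1) ≠ 0 := mul_ne_zero hg₀ (by positivity)
    obtain ⟨hS, hrest⟩ := And.imp (mul_left_cancel₀ hc) (mul_left_cancel₀ hc) hβ
    replace hS := sub_right_injective hS
    rw [← hS] at hrest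
    have hP := mul_eq_mul_of_div_add_mul_eq (by linarith) (mem _ hβ₁) (mem _ hβ₂)
      (mem _ h₁) (mem _ h₂) (add_left_cancel hrest)
    rcases eq_and_eq_or_eq_and_eq_of_add_eq_of_mul_eq hS hP with ⟨e₁, e₂⟩ | ⟨e₁, e₂⟩
    · exact Or.inl (Prod.ext (cpeCoord_injective T e₁) (cpeCoord_injective T e₂))
    · exact Or.inr (Prod.ext (cpeCoord_injective T e₁) (cpeCoord_injective T e₂))
  refine ⟨fiber, ((finite_singleton (α₂, α₁)).insert (α₁, α₂)).subset ?_⟩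
  rintro β ⟨hβ₁, hβ₂, hβ⟩
  exact fiber β hβ₁ hβ₂ hβ
end
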